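/- arXiv:math/9803149 — 3 statements merged into one kernel-verified Lean document; each statement's English description precedes it below -/
import Mathlib

section
/- For the 2-coloring of [1,n] given by coloring i with color 0 if i ≤ 4n/11 or i > 10n/11, and color 1 otherwise, the number of monochromatic Schur triples {i, j, i+j} with i < j and i+j ≤ n is n²/22 + O(n). Precisely, there exists a constant C such that for all n, the count differs from n²/22 by at most C·n. -/
/-!
For each `i`, the `j` completing a monochromatic triple `(i, j, i + j)` form at most two
intervals, so for the coloring `0^a 1^(b-a) 0^(n-b)` the count is, up to `O(n)`, a sum of
triangular lattice-point counts: `a²/4` inside the first block, `b²/4 - (ab - a²)` inside the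
middle block and `(n - b)²/2` for `i` in the first block and `j, i + j` in the last one.
At `a = 4n/11`, `b = 10n/11` this quadratic form has vanishing gradient in `(a, b)` and value
`n²/22`, so rounding the cut points to integers changes it only by `O(1)`.
-/

open Finset

/-- Number of monochromatic Schur triples (i, j, i+j), i < j, i+j ≤ n, of a coloring c. -/
def schurCount (n : ℕ) (c : ℕ → ℕ) : ℕ :=
  ((Finset.Icc 1 n ×ˢ Finset.Icc 1 n).filter
    (fun p => p.1 < p.2 ∧ p.1 + p.2 ≤ n ∧ c p.1 = c p.2 ∧ c p.2 = c (p.1 + p.2))).card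

/-- The coloring 0^{4n/11} 1^{6n/11} 0^{n/11}: color 0 if i ≤ 4n/11 or i > 10n/11, else 1. -/
def optColoring (n : ℕ) (i : ℕ) : ℕ :=
  if i ≤ 4 * n / 11 ∨ 10 * n / 11 < i then 0 else 1

lemma sum_Ioc_zero_natCast (h : ℕ) : ∑ i ∈ Ioc 0 h, (i : ℝ) = h * (h + 1) / 2 := by
  induction h with
  | zero => simp
  | succ k ih =>
    rw [sum_Ioc_succ_top (Nat.zero_le k), ih]
    push_cast
    ring

lemma abs_sum_Ioc_tsub_mul_sub_le {c m N : ℕ} (hc : 0 < c) (hm : m ≤ c * N) :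
    |∑ i ∈ Ioc 0 N, ((m - c * i : ℕ) : ℝ) - m ^ 2 / (2 * c)| ≤ (m : ℝ) / 2 := by
  set h := m / c
  have hmul : c * h ≤ m := Nat.mul_div_le m c
  have hlt : m < c * (h + 1) := Nat.lt_mul_div_succ m hc
  have htrunc : ∑ i ∈ Ioc 0 h, ((m - c * i : ℕ) : ℝ) = ∑ i ∈ Ioc 0 N, ((m - c * i : ℕ) : ℝ) := by
    refine sum_subset (Ioc_subset_Ioc_right (Nat.div_le_of_le_mul hm)) fun i hi hih => ?_
    have : c * (h + 1) ≤ c * i := Nat.mul_le_mul_left c (by simp_all)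
    rw [Nat.cast_eq_zero]
    omega
  have hsum : ∑ i ∈ Ioc 0 h, ((m - c * i : ℕ) : ℝ) = h * m - c * (h * (h + 1) / 2) := by
    rw [sum_congr rfl fun i hi => Nat.cast_sub (le_trans
      (Nat.mul_le_mul_left c (mem_Ioc.mp hi).2) hmul), sum_sub_distrib]
    simp [← mul_sum, sum_Ioc_zero_natCast]
  have hcR : (0 : ℝ) < c := by exact_mod_cast hc
  have hmulR : (c * h : ℝ) ≤ m := by exact_mod_cast hmul
  have hltR : (m : ℝ) < c * h + c := by exact_mod_cast (mul_add_one c h ▸ hlt)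
  have herror : (h * m - c * (h * (h + 1) / 2) - m ^ 2 / (2 * c) : ℝ)
      = -((m - c * h) ^ 2 / (2 * c)) - c * h / 2 := by
    field_simp
    ring
  have hsq : ((m - c * h) ^ 2 / (2 * c) : ℝ) ≤ (m - c * h) / 2 := by
    rw [div_le_iff₀ (by positivity)]
    nlinarith
  rw [← htrunc, hsum, herror, abs_le]
  constructor
  · linarith
  · have : (0 : ℝ) ≤ (m - c * h) ^ 2 / (2 * c) := by positivity
    have : (0 : ℝ) ≤ c * h := by positivity
    linarith

def blockColoring (a b i : ℕ) : ℕ :=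
  if i ≤ a ∨ b < i then 0 else 1

lemma optColoring_eq_blockColoring (n : ℕ) :
    optColoring n = blockColoring (4 * n / 11) (10 * n / 11) := rfl

lemma blockColoring_eq_iff {a b i j : ℕ} :
    blockColoring a b i = blockColoring a b j ↔ (i ≤ a ∨ b < i ↔ j ≤ a ∨ b < j) := by
  unfold blockColoring
  split_ifs <;> simp_all
  omega

lemma schurCount_eq_sum_card (n : ℕ) (c : ℕ → ℕ) :
    schurCount n c = ∑ i ∈ Ioc 0 n, #{j ∈ Ioc 0 n | i < j ∧ i + j ≤ n ∧ c i = c j ∧ c j = c (i + j)} := by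
  simp only [schurCount, card_filter, sum_product]
  rfl

lemma card_filter_blockColoring {n a b : ℕ} (i : ℕ) (h2a : 2 * a ≤ b) (hbn : b ≤ n)
    (hn : n ≤ 2 * b + 2) :
    #{j ∈ Ioc 0 n | i < j ∧ i + j ≤ n ∧ blockColoring a b i = blockColoring a b j ∧
        blockColoring a b j = blockColoring a b (i + j)} =
      if i ≤ a then (a - 2 * i) + (n - b - i) else b - 2 * i := by
  split_ifs with hia
  · have hunion : {j ∈ Ioc 0 n | i < j ∧ i + j ≤ n ∧ blockColoring a b i = blockColoring a b j ∧
        blockColoring a b j = blockColoring a b (i + j)} = Ioc i (a - i) ∪ Ioc b (n - i) := by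
      ext j
      rw [mem_filter]
      simp only [mem_Ioc, mem_union, blockColoring_eq_iff]
      omega
    have hdisj : Disjoint (Ioc i (a - i)) (Ioc b (n - i)) :=
      disjoint_left.2 fun j hj hj' => by rw [mem_Ioc] at hj hj'; omega
    rw [hunion, card_union_of_disjoint hdisj, Nat.card_Ioc, Nat.card_Ioc]
    omega
  · have hmiddle : {j ∈ Ioc 0 n | i < j ∧ i + j ≤ n ∧ blockColoring a b i = blockColoring a b j ∧
        blockColoring a b j = blockColoring a b (i + j)} = Ioc i (b - i) := by
      ext j
      rw [mem_filter]
      simp only [mem_Ioc, blockColoring_eq_iff]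
      omega
    rw [hmiddle, Nat.card_Ioc]
    omega

lemma schurCount_blockColoring_add {n a b : ℕ} (h2a : 2 * a ≤ b) (hbn : b ≤ n) (hn : n ≤ 2 * b + 2)
    (hnab : n ≤ a + b + 1) :
    schurCount n (blockColoring a b) + ∑ i ∈ Ioc 0 a, (b - 2 * i) =
      ∑ i ∈ Ioc 0 n, ((a - 2 * i) + (n - b - i) + (b - 2 * i)) := by
  have han : a ≤ n := by omega
  rw [schurCount_eq_sum_card, ← sum_Ioc_consecutive _ (Nat.zero_le a) han,
    ← sum_Ioc_consecutive _ (Nat.zero_le a) han, add_right_comm, ← sum_add_distrib]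
  congr 1 <;> refine sum_congr rfl fun i hi => ?_ <;> rw [mem_Ioc] at hi <;>
    rw [card_filter_blockColoring i h2a hbn hn]
  · rw [if_pos hi.2]
  · rw [if_neg (by omega)]
    omega

noncomputable def blockMainTerm (n a b : ℝ) : ℝ :=
  a ^ 2 / 4 + (b ^ 2 / 4 - (a * b - a ^ 2)) + (n - b) ^ 2 / 2

lemma abs_schurCount_blockColoring_sub_le {n a b : ℕ} (h2a : 2 * a ≤ b) (hbn : b ≤ n)
    (hn : n ≤ 2 * b + 2) (hnab : n ≤ a + b + 1) :
    |(schurCount n (blockColoring a b) : ℝ) - blockMainTerm n a b| ≤ 2 * (n : ℝ) := by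
  have hcount := congrArg (Nat.cast (R := ℝ)) (schurCount_blockColoring_add h2a hbn hn hnab)
  rw [sum_add_distrib, sum_add_distrib] at hcount
  push_cast at hcount
  have hmiddle : ∑ i ∈ Ioc 0 a, ((b - 2 * i : ℕ) : ℝ) = a * b - a * (a + 1) := by
    rw [sum_congr rfl fun i hi => Nat.cast_sub (by rw [mem_Ioc] at hi; omega)]
    simp [sum_sub_distrib, ← mul_sum, sum_Ioc_zero_natCast]
    ring
  have hA := abs_sum_Ioc_tsub_mul_sub_le (c := 2) (m := a) (N := n) two_pos (by omega)
  have hD := abs_sum_Ioc_tsub_mul_sub_le (c := 1) (m := n - b) (N := n) one_pos (by omega)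
  have hB := abs_sum_Ioc_tsub_mul_sub_le (c := 2) (m := b) (N := n) two_pos (by omega)
  simp only [one_mul, Nat.cast_sub hbn] at hD
  have han : (a : ℝ) ≤ n := by exact_mod_cast (by omega : a ≤ n)
  rw [abs_le] at hA hD hB ⊢
  unfold blockMainTerm
  push_cast at hA hB
  constructor <;> linarith

lemma blockMainTerm_eq (n a b : ℝ) :
    blockMainTerm n a b = n ^ 2 / 22 +
      (5 * (11 * a - 4 * n) ^ 2 - 4 * (11 * a - 4 * n) * (11 * b - 10 * n) +
        3 * (11 * b - 10 * n) ^ 2) / 484 := by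
  unfold blockMainTerm
  ring

lemma abs_blockMainTerm_sub_le {n a b : ℝ} (ha : 0 ≤ a) (hb : 0 ≤ b) (ha₁ : 4 * n ≤ 11 * a + 10)
    (ha₂ : 11 * a ≤ 4 * n) (hb₁ : 10 * n ≤ 11 * b + 10) (hb₂ : 11 * b ≤ 10 * n) :
    |blockMainTerm n a b - n ^ 2 / 22| ≤ 2 * n := by
  have hp : (4 * n - 11 * a) ^ 2 ≤ 10 * (4 * n) :=
    pow_two (4 * n - 11 * a) ▸ mul_le_mul (by linarith) (by linarith) (by linarith) (by norm_num)
  have hq : (10 * n - 11 * b) ^ 2 ≤ 10 * (10 * n) :=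
    pow_two (10 * n - 11 * b) ▸ mul_le_mul (by linarith) (by linarith) (by linarith) (by norm_num)
  have hpq : 0 ≤ (4 * n - 11 * a) * (10 * n - 11 * b) := mul_nonneg (by linarith) (by linarith)
  rw [blockMainTerm_eq, add_sub_cancel_left, abs_of_nonneg, div_le_iff₀ (by norm_num)]
  · nlinarith
  · exact div_nonneg (by nlinarith) (by norm_num)

theorem schurCount_optColoring :
    ∃ C : ℝ, ∀ n : ℕ,
      |(schurCount n (optColoring n) : ℝ) - (n : ℝ) ^ 2 / 22| ≤ C * n := by
  refine ⟨4, fun n => ?_⟩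
  set a := 4 * n / 11
  set b := 10 * n / 11
  have hcount : |(schurCount n (blockColoring a b) : ℝ) - blockMainTerm n a b| ≤ 2 * (n : ℝ) :=
    abs_schurCount_blockColoring_sub_le (by omega) (by omega) (by omega) (by omega)
  have hmain : |blockMainTerm n a b - n ^ 2 / 22| ≤ 2 * (n : ℝ) := by
    apply abs_blockMainTerm_sub_le (Nat.cast_nonneg a) (Nat.cast_nonneg b) <;> norm_cast <;> omega
  rw [optColoring_eq_blockColoring]
  linarith [abs_sub_le (schurCount n (blockColoring a b) : ℝ) (blockMainTerm n a b) (n ^ 2 / 22)]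
end

section
/- Let Z_0 be the 0/1-coloring 0^{4n/11} 1^{6n/11} 0^{n/11} of {1, ..., n}. Then the number of monochromatic Schur triples of Z_0 equals n²/22 + O(n). -/
set_option maxHeartbeats 2000000

open Finset

/-- The coloring Z₀ = 0^{4n/11} 1^{6n/11} 0^{n/11}: position i gets 0 if i ≤ ⌊4n/11⌋ or
i > ⌊10n/11⌋, and 1 otherwise. -/
def Z0 (n : ℕ) (i : ℕ) : ℕ :=
  if i ≤ 4 * n / 11 ∨ 10 * n / 11 < i then 0 else 1

lemma card_filter_prod (s t : Finset ℕ) (P : ℕ → ℕ → Prop) [∀ i j, Decidable (P i j)] :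
    ((s ×ˢ t).filter (fun p => P p.1 p.2)).card = ∑ i ∈ s, (t.filter (P i)).card := by
  have : (s ×ˢ t).filter (fun p => P p.1 p.2)
      = s.biUnion (fun i => {i} ×ˢ t.filter (P i)) := by
    ext ⟨i, j⟩
    simp only [mem_filter, mem_product, mem_biUnion, mem_singleton]
    constructor
    · rintro ⟨⟨hi, hj⟩, hP⟩
      exact ⟨i, hi, rfl, hj, hP⟩
    · rintro ⟨k, hk, rfl, hj, hP⟩
      exact ⟨⟨hk, hj⟩, hP⟩
  rw [this, card_biUnion]
  · refine Finset.sum_congr rfl fun i _ => ?_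
    rw [singleton_product, card_map]
  · intro x _ y _ hxy
    simp only [disjoint_left]
    rintro ⟨i, j⟩ hi hj
    simp only [mem_product, mem_singleton] at hi hj
    exact hxy (hi.1.symm.trans hj.1)

lemma aux_sq (m : ℕ) : (m - 1)^2/4 + m/2 = m^2/4 := by
  rcases m with _ | k
  · simp
  · rcases Nat.even_or_odd k with ⟨t, ht⟩ | ⟨t, ht⟩ <;> subst ht
    · have h1 : (t + t)^2 = 4*t^2 := by ring
      have h2 : (t + t + 1)^2 = 4*t^2 + 4*t + 1 := by ring
      simp only [Nat.add_sub_cancel]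
      omega
    · have h1 : (2*t + 1)^2 = 4*t^2 + 4*t + 1 := by ring
      have h2 : (2*t + 1 + 1)^2 = 4*t^2 + 8*t + 4 := by ring
      simp only [Nat.add_sub_cancel]
      omega

lemma sum_sub_two (m : ℕ) : ∀ n, m ≤ 2 * n + 2 → ∑ i ∈ Icc 1 n, (m - 2 * i) = (m - 1)^2 / 4 := by
  induction m with
  | zero => intro n _; simp
  | succ m ih =>
    intro n hn
    have h1 : ∑ i ∈ Icc 1 n, (m + 1 - 2 * i)
        = ∑ i ∈ Icc 1 n, ((m - 2 * i) + if 2 * i ≤ m then 1 else 0) := by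
      refine Finset.sum_congr rfl fun i _ => ?_
      split_ifs <;> omega
    rw [h1, Finset.sum_add_distrib, Finset.sum_boole]
    have h2 : (Icc 1 n).filter (fun i => 2 * i ≤ m) = Icc 1 (m / 2) := by
      ext i; simp only [mem_filter, mem_Icc]; omega
    rcases Nat.lt_or_ge m (2 * n + 3) with h | h
    · rw [ih n (by omega), h2]
      have h3 := aux_sq m
      simp only [Nat.card_Icc, Nat.add_sub_cancel, smul_eq_mul, mul_one, Nat.cast_id] at *
      omega
    · omega

lemma sum_sub_one (d : ℕ) : ∀ n, d ≤ n + 1 → ∑ i ∈ Icc 1 n, (d - i) = d * (d - 1) / 2 := by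
  induction d with
  | zero => intro n _; simp
  | succ d ih =>
    intro n hn
    have h1 : ∑ i ∈ Icc 1 n, (d + 1 - i)
        = ∑ i ∈ Icc 1 n, ((d - i) + if i ≤ d then 1 else 0) := by
      refine Finset.sum_congr rfl fun i hi => ?_
      simp only [mem_Icc] at hi
      split_ifs <;> omega
    rw [h1, Finset.sum_add_distrib, Finset.sum_boole]
    have h2 : (Icc 1 n).filter (fun i => i ≤ d) = Icc 1 (min d n) := by
      ext i; simp only [mem_filter, mem_Icc]; omega
    rw [ih n (by omega), h2, Nat.min_eq_left (by omega : d ≤ n)]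
    have h3 : (d + 1) * (d + 1 - 1) = d * (d - 1) + 2 * d := by
      rcases d with _ | e
      · simp
      · simp only [Nat.add_sub_cancel]; ring
    simp only [Nat.card_Icc, smul_eq_mul, mul_one, Nat.cast_id]
    omega

lemma Z0_eq_iff (n x y : ℕ) : Z0 n x = Z0 n y ↔
    ((x ≤ 4*n/11 ∨ 10*n/11 < x) ↔ (y ≤ 4*n/11 ∨ 10*n/11 < y)) := by
  unfold Z0
  split_ifs <;> simp [*] <;> omega

lemma schur_formula (n : ℕ) :
    schurCount n (Z0 n) =
      (4*n/11 - 1)^2/4 + ((10*n/11 - 2*(4*n/11)) - 1)^2/4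
        + (n - 10*n/11) * ((n - 10*n/11) - 1)/2 := by
  unfold schurCount
  rw [filter_congr (q := fun p : ℕ × ℕ =>
        (p.1 < p.2 ∧ p.1 + p.2 ≤ 4*n/11) ∨
        ((4*n/11 < p.1 ∧ p.1 < p.2 ∧ p.1 + p.2 ≤ 10*n/11) ∨
         (p.1 ≤ 4*n/11 ∧ 10*n/11 < p.2 ∧ p.1 + p.2 ≤ n)))
      (fun p hp => by
        obtain ⟨i, j⟩ := p
        simp only [mem_product, mem_Icc] at hp
        simp only [Z0_eq_iff]
        omega)]
  have hD2 : Disjoint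
      ((Icc 1 n ×ˢ Icc 1 n).filter
        (fun p : ℕ × ℕ => 4*n/11 < p.1 ∧ p.1 < p.2 ∧ p.1 + p.2 ≤ 10*n/11))
      ((Icc 1 n ×ˢ Icc 1 n).filter
        (fun p : ℕ × ℕ => p.1 ≤ 4*n/11 ∧ 10*n/11 < p.2 ∧ p.1 + p.2 ≤ n)) := by
    rw [Finset.disjoint_filter]
    rintro ⟨i, j⟩ _ h1
    push_neg
    omega
  have hD1 : Disjoint
      ((Icc 1 n ×ˢ Icc 1 n).filter (fun p : ℕ × ℕ => p.1 < p.2 ∧ p.1 + p.2 ≤ 4*n/11))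
      (((Icc 1 n ×ˢ Icc 1 n).filter
          (fun p : ℕ × ℕ => 4*n/11 < p.1 ∧ p.1 < p.2 ∧ p.1 + p.2 ≤ 10*n/11)) ∪
       ((Icc 1 n ×ˢ Icc 1 n).filter
          (fun p : ℕ × ℕ => p.1 ≤ 4*n/11 ∧ 10*n/11 < p.2 ∧ p.1 + p.2 ≤ n))) := by
    rw [Finset.disjoint_left]
    rintro ⟨i, j⟩ h1 h2
    simp only [mem_filter, mem_union, mem_product, mem_Icc] at h1 h2
    omega
  rw [filter_or, filter_or, card_union_of_disjoint hD1, card_union_of_disjoint hD2]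
  have hA : ((Icc 1 n ×ˢ Icc 1 n).filter
      (fun p : ℕ × ℕ => p.1 < p.2 ∧ p.1 + p.2 ≤ 4*n/11)).card = (4*n/11 - 1)^2/4 := by
    rw [card_filter_prod (Icc 1 n) (Icc 1 n) (fun i j => i < j ∧ i + j ≤ 4*n/11)]
    rw [show ∑ i ∈ Icc 1 n, ((Icc 1 n).filter (fun j => i < j ∧ i + j ≤ 4*n/11)).card
        = ∑ i ∈ Icc 1 n, (4*n/11 - 2*i) from
      Finset.sum_congr rfl (fun i hi => by
        simp only [mem_Icc] at hi
        rw [show (Icc 1 n).filter (fun j => i < j ∧ i + j ≤ 4*n/11) = Ioc i (4*n/11 - i) by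
          ext j; simp only [mem_filter, mem_Icc, mem_Ioc]; omega]
        rw [Nat.card_Ioc]; omega)]
    exact sum_sub_two _ n (by omega)
  have hB : ((Icc 1 n ×ˢ Icc 1 n).filter
      (fun p : ℕ × ℕ => 4*n/11 < p.1 ∧ p.1 < p.2 ∧ p.1 + p.2 ≤ 10*n/11)).card
      = ((10*n/11 - 2*(4*n/11)) - 1)^2/4 := by
    rw [card_filter_prod (Icc 1 n) (Icc 1 n) (fun i j => 4*n/11 < i ∧ i < j ∧ i + j ≤ 10*n/11)]
    rw [show ∑ i ∈ Icc 1 n, ((Icc 1 n).filter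
          (fun j => 4*n/11 < i ∧ i < j ∧ i + j ≤ 10*n/11)).card
        = ∑ i ∈ Icc 1 n, (if 4*n/11 < i then 10*n/11 - 2*i else 0) from
      Finset.sum_congr rfl (fun i hi => by
        simp only [mem_Icc] at hi
        split_ifs with h
        · rw [show (Icc 1 n).filter (fun j => 4*n/11 < i ∧ i < j ∧ i + j ≤ 10*n/11)
              = Ioc i (10*n/11 - i) by
            ext j; simp only [mem_filter, mem_Icc, mem_Ioc]; omega]
          rw [Nat.card_Ioc]; omega
        · rw [show (Icc 1 n).filter (fun j => 4*n/11 < i ∧ i < j ∧ i + j ≤ 10*n/11) = ∅ by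
            ext j; simp only [mem_filter, mem_Icc, notMem_empty, iff_false]; omega]
          rfl)]
    rw [← Finset.sum_filter]
    rw [show (Icc 1 n).filter (fun i => 4*n/11 < i) = Icc (4*n/11 + 1) n by
      ext i; simp only [mem_filter, mem_Icc]; omega]
    rw [show Icc (4*n/11 + 1) n = (Icc 1 (n - 4*n/11)).map (addLeftEmbedding (4*n/11)) by
      rw [map_add_left_Icc]; congr 1; omega]
    rw [Finset.sum_map]
    rw [show ∑ i ∈ Icc 1 (n - 4*n/11), (10*n/11 - 2 * (addLeftEmbedding (4*n/11) i))
        = ∑ i ∈ Icc 1 (n - 4*n/11), ((10*n/11 - 2*(4*n/11)) - 2*i) from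
      Finset.sum_congr rfl (fun i _ => by
        simp only [addLeftEmbedding_apply]; omega)]
    exact sum_sub_two _ _ (by omega)
  have hC : ((Icc 1 n ×ˢ Icc 1 n).filter
      (fun p : ℕ × ℕ => p.1 ≤ 4*n/11 ∧ 10*n/11 < p.2 ∧ p.1 + p.2 ≤ n)).card
      = (n - 10*n/11) * ((n - 10*n/11) - 1)/2 := by
    rw [card_filter_prod (Icc 1 n) (Icc 1 n) (fun i j => i ≤ 4*n/11 ∧ 10*n/11 < j ∧ i + j ≤ n)]
    rw [show ∑ i ∈ Icc 1 n, ((Icc 1 n).filter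
          (fun j => i ≤ 4*n/11 ∧ 10*n/11 < j ∧ i + j ≤ n)).card
        = ∑ i ∈ Icc 1 n, ((n - 10*n/11) - i) from
      Finset.sum_congr rfl (fun i hi => by
        simp only [mem_Icc] at hi
        by_cases h : i ≤ 4*n/11
        · rw [show (Icc 1 n).filter (fun j => i ≤ 4*n/11 ∧ 10*n/11 < j ∧ i + j ≤ n)
              = Ioc (10*n/11) (n - i) by
            ext j; simp only [mem_filter, mem_Icc, mem_Ioc]; omega]
          rw [Nat.card_Ioc]; omega
        · rw [show (Icc 1 n).filter (fun j => i ≤ 4*n/11 ∧ 10*n/11 < j ∧ i + j ≤ n) = ∅ by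
            ext j; simp only [mem_filter, mem_Icc, notMem_empty, iff_false]; omega]
          rw [show ((∅ : Finset ℕ)).card = 0 from rfl]
          omega)]
    exact sum_sub_one _ n (by omega)
  rw [hA, hB, hC]
  ring

theorem schurCount_Z0 :
    ∃ C : ℝ, ∀ n : ℕ,
      |(schurCount n (Z0 n) : ℝ) - (n : ℝ) ^ 2 / 22| ≤ C * n := by
  refine ⟨30, fun n => ?_⟩
  rw [schur_formula]
  set a := 4*n/11 with ha
  set b := 10*n/11 with hb
  set c := b - 2*a with hc
  set d := n - b with hd
  set a1 := a - 1 with ha1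
  set c1 := c - 1 with hc1
  set d1 := d - 1 with hd1
  set A := a1^2/4 with hA
  set B := c1^2/4 with hB
  set D := d*d1/2 with hD
  have hA' : A = a1*a1/4 := by rw [hA]; ring_nf
  have hB' : B = c1*c1/4 := by rw [hB]; ring_nf
  -- real-cast facts
  have ra1 : 11*(a1:ℝ) ≤ 4*n := by exact_mod_cast Nat.cast_le.mpr (show 11*a1 ≤ 4*n by omega)
  have ra2 : 4*(n:ℝ) ≤ 11*a1 + 21 := by exact_mod_cast Nat.cast_le.mpr (show 4*n ≤ 11*a1 + 21 by omega)
  have rc1 : 11*(c1:ℝ) ≤ 2*n + 20 := by exact_mod_cast Nat.cast_le.mpr (show 11*c1 ≤ 2*n + 20 by omega)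
  have rc2 : 2*(n:ℝ) ≤ 11*c1 + 41 := by exact_mod_cast Nat.cast_le.mpr (show 2*n ≤ 11*c1 + 41 by omega)
  have rd1 : 11*(d:ℝ) ≤ n + 10 := by exact_mod_cast Nat.cast_le.mpr (show 11*d ≤ n + 10 by omega)
  have rd2 : (n:ℝ) ≤ 11*d := by exact_mod_cast Nat.cast_le.mpr (show n ≤ 11*d by omega)
  have rd3 : 11*(d1:ℝ) ≤ n := by exact_mod_cast Nat.cast_le.mpr (show 11*d1 ≤ n by omega)
  have rd4 : (n:ℝ) ≤ 11*d1 + 11 := by exact_mod_cast Nat.cast_le.mpr (show n ≤ 11*d1 + 11 by omega)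
  have rA1 : 4*(A:ℝ) ≤ (a1:ℝ)*a1 := by exact_mod_cast Nat.cast_le.mpr (show 4*A ≤ a1*a1 by omega)
  have rA2 : (a1:ℝ)*a1 ≤ 4*A + 3 := by exact_mod_cast Nat.cast_le.mpr (show a1*a1 ≤ 4*A + 3 by omega)
  have rB1 : 4*(B:ℝ) ≤ (c1:ℝ)*c1 := by exact_mod_cast Nat.cast_le.mpr (show 4*B ≤ c1*c1 by omega)
  have rB2 : (c1:ℝ)*c1 ≤ 4*B + 3 := by exact_mod_cast Nat.cast_le.mpr (show c1*c1 ≤ 4*B + 3 by omega)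
  have rD1 : 2*(D:ℝ) ≤ (d:ℝ)*d1 := by exact_mod_cast Nat.cast_le.mpr (show 2*D ≤ d*d1 by omega)
  have rD2 : (d:ℝ)*d1 ≤ 2*D + 1 := by exact_mod_cast Nat.cast_le.mpr (show d*d1 ≤ 2*D + 1 by omega)
  have na1 : (0:ℝ) ≤ a1 := Nat.cast_nonneg _
  have nc1 : (0:ℝ) ≤ c1 := Nat.cast_nonneg _
  have nd : (0:ℝ) ≤ d := Nat.cast_nonneg _
  have nd1 : (0:ℝ) ≤ d1 := Nat.cast_nonneg _
  have nn : (0:ℝ) ≤ n := Nat.cast_nonneg _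
  have hcast : ((A + B + D : ℕ) : ℝ) = (A:ℝ) + B + D := by push_cast; ring
  rw [hcast, abs_le]
  constructor
  · -- lower bound: n^2/22 - 30n ≤ A+B+D
    rcases le_or_gt (n:ℕ) 20 with hsm | hlg
    · have : (n:ℝ) ≤ 20 := by exact_mod_cast hsm
      have hA0 : (0:ℝ) ≤ A := Nat.cast_nonneg _
      have hB0 : (0:ℝ) ≤ B := Nat.cast_nonneg _
      have hD0 : (0:ℝ) ≤ D := Nat.cast_nonneg _
      nlinarith
    · have hn21 : (21:ℝ) ≤ n := by exact_mod_cast hlg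
      have p1 : (0:ℝ) ≤ (11*a1 - (4*n - 21)) * (11*a1 + (4*n - 21)) :=
        mul_nonneg (by linarith) (by linarith)
      have p2 : (0:ℝ) ≤ (11*c1 - (2*n - 41)) * (11*c1 + (2*n - 41)) :=
        mul_nonneg (by linarith) (by linarith)
      have p3 : (0:ℝ) ≤ (11*d - n) * (11*d1) := mul_nonneg (by linarith) (by linarith)
      have p4 : (0:ℝ) ≤ (11*d1 - (n - 11)) * n := mul_nonneg (by linarith) nn
      have e1 : 16*(n:ℝ)^2 - 168*n + 441 ≤ 121*((a1:ℝ)*a1) := by nlinarith [p1]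
      have e2 : 4*(n:ℝ)^2 - 164*n + 1681 ≤ 121*((c1:ℝ)*c1) := by nlinarith [p2]
      have e3 : (n:ℝ)^2 - 11*n ≤ 121*((d:ℝ)*d1) := by nlinarith [p3, p4]
      linarith [e1, e2, e3, rA2, rB2, rD2]
  · -- upper bound: A+B+D ≤ n^2/22 + 30n
    rcases Nat.eq_zero_or_pos n with h0 | hpos
    · subst h0
      norm_num at *
    · have hn1 : (1:ℝ) ≤ n := by exact_mod_cast hpos
      have q1 : (0:ℝ) ≤ (4*n - 11*a1) * (4*n + 11*a1) :=
        mul_nonneg (by linarith) (by linarith)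
      have q2 : (0:ℝ) ≤ (2*n + 20 - 11*c1) * (2*n + 20 + 11*c1) :=
        mul_nonneg (by linarith) (by linarith)
      have q3 : (0:ℝ) ≤ (n + 10 - 11*d) * (11*d1) := mul_nonneg (by linarith) (by linarith)
      have q4 : (0:ℝ) ≤ (n - 11*d1) * (n + 10) := mul_nonneg (by linarith) (by linarith)
      have e1 : 121*((a1:ℝ)*a1) ≤ 16*(n:ℝ)^2 := by nlinarith [q1]
      have e2 : 121*((c1:ℝ)*c1) ≤ 4*(n:ℝ)^2 + 80*n + 400 := by nlinarith [q2]
      have e3 : 121*((d:ℝ)*d1) ≤ (n:ℝ)^2 + 10*n := by nlinarith [q3, q4]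
      linarith [e1, e2, e3, rA1, rB1, rD1, hn1]
end

section
/- The alternating coloring Z_∞^t = (0^t 1^t)^{n/(2t)} of {1,...,n} (blocks of t zeros alternating with t ones), for any fixed t ≥ 1, has n²/16 + O(n) monochromatic Schur triples. -/
open Finset

/-- The alternating coloring (0^t 1^t)^∞ : i gets 0 if ⌈i/t⌉ is odd and 1 if it is even. -/
def altColoring (t : ℕ) (i : ℕ) : ℕ :=
  if ((i + t - 1) / t) % 2 = 1 then 0 else 1

/-!
With `χ = 1 - 2c ∈ {±1}` for the coloring `c`, the expression
`1 + χ(i)χ(j) + χ(i)χ(i+j) + χ(j)χ(i+j)` is `4` if the three colors agree and `0` otherwise. So `4`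
times the number of monochromatic triples is the number `n²/4 + O(n)` of pairs `1 ≤ i < j`,
`i + j ≤ n`, plus three correlation sums. Since `χ(x + t) = -χ(x)`, every sum of `χ` over an
interval is at most `4t` in absolute value. Each correlation sum has the shape
`∑ₓ χ(x) · (sum of χ over an interval)` (for `χ(j)χ(i+j)` after summing over `i` first), so it
is `O(tn)`.
-/

section PeriodicSums

variable {χ : ℕ → ℤ} {p : ℕ}

theorem sum_range_mul_add_of_periodic (hper : Function.Periodic χ p)
    (hsum : ∑ x ∈ range p, χ x = 0) (k r : ℕ) :
    ∑ x ∈ range (p * k + r), χ x = ∑ x ∈ range r, χ x := by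
  induction k with
  | zero => simp
  | succ k ih =>
    rw [show p * (k + 1) + r = p + (p * k + r) by ring, sum_range_add, hsum, zero_add, ← ih]
    exact sum_congr rfl fun x _ => by rw [add_comm, hper]

theorem abs_sum_range_le_of_periodic (hp : 0 < p) (hper : Function.Periodic χ p)
    (hsum : ∑ x ∈ range p, χ x = 0) (hχ : ∀ x, |χ x| ≤ 1) (m : ℕ) :
    |∑ x ∈ range m, χ x| ≤ p := by
  rw [← Nat.div_add_mod m p, sum_range_mul_add_of_periodic hper hsum]
  calc |∑ x ∈ range (m % p), χ x| ≤ ∑ x ∈ range (m % p), |χ x| := abs_sum_le_sum_abs _ _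
    _ ≤ #(range (m % p)) • (1 : ℤ) := sum_le_card_nsmul _ _ _ fun x _ => hχ x
    _ ≤ p := by
        rw [card_range, nsmul_one]
        exact_mod_cast (Nat.mod_lt m hp).le

theorem abs_sum_Ico_le_of_periodic (hp : 0 < p) (hper : Function.Periodic χ p)
    (hsum : ∑ x ∈ range p, χ x = 0) (hχ : ∀ x, |χ x| ≤ 1) (a b : ℕ) :
    |∑ x ∈ Ico a b, χ x| ≤ 2 * p := by
  rcases le_total a b with hab | hba
  · rw [sum_Ico_eq_sub _ hab]
    have hb := abs_sum_range_le_of_periodic hp hper hsum hχ b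
    have ha := abs_sum_range_le_of_periodic hp hper hsum hχ a
    linarith [abs_sub (∑ x ∈ range b, χ x) (∑ x ∈ range a, χ x)]
  · simp [Ico_eq_empty_of_le hba]

end PeriodicSums

theorem abs_sum_mul_sum_Ico_le {f g : ℕ → ℤ} {B : ℤ} (hf : ∀ x, |f x| ≤ 1)
    (hg : ∀ a b, |∑ y ∈ Ico a b, g y| ≤ B) (s : Finset ℕ) (a b : ℕ → ℕ) :
    |∑ x ∈ s, f x * ∑ y ∈ Ico (a x) (b x), g y| ≤ #s * B := by
  calc |∑ x ∈ s, f x * ∑ y ∈ Ico (a x) (b x), g y|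
      ≤ ∑ x ∈ s, |f x * ∑ y ∈ Ico (a x) (b x), g y| := abs_sum_le_sum_abs _ _
    _ ≤ #s • B := sum_le_card_nsmul _ _ _ fun x _ => by
        rw [abs_mul]
        exact (mul_le_mul (hf x) (hg _ _) (abs_nonneg _) zero_le_one).trans_eq (one_mul B)
    _ = #s * B := nsmul_eq_mul _ _

theorem schurCount_eq_sum (n : ℕ) (c : ℕ → ℕ) :
    schurCount n c = ∑ i ∈ Icc 1 n, ∑ j ∈ Ico (i + 1) (n + 1 - i),
      if c i = c j ∧ c j = c (i + j) then 1 else 0 := by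
  rw [schurCount, card_filter, sum_product]
  refine sum_congr rfl fun i hi => ?_
  have hwindow : (Icc 1 n).filter (fun j => i < j ∧ i + j ≤ n) = Ico (i + 1) (n + 1 - i) := by
    ext j
    simp only [mem_filter, mem_Icc, mem_Ico] at hi ⊢
    omega
  simp only [← hwindow, sum_filter, ite_and]

theorem sum_triangle_comm {M : Type*} [AddCommMonoid M] (n : ℕ) (f : ℕ → ℕ → M) :
    ∑ i ∈ Icc 1 n, ∑ j ∈ Ico (i + 1) (n + 1 - i), f i j =
      ∑ j ∈ Icc 1 n, ∑ i ∈ Ico 1 (min j (n + 1 - j)), f i j :=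
  sum_comm' fun i j => by simp only [mem_Icc, mem_Ico]; omega

theorem four_mul_sum_Icc_tsub_add_two_mul (n : ℕ) :
    4 * ∑ i ∈ Icc 1 n, (n + 1 - i - (i + 1)) + 2 * n = n ^ 2 + n % 2 := by
  have hrange : ∀ m, ∑ i ∈ Icc 1 m, (m + 1 - i - (i + 1))
      = ∑ k ∈ range m, (m - k - (k + 2)) := by
    intro m
    have hshift := sum_Ico_add' (fun i => m + 1 - i - (i + 1)) 0 m 1
    rw [zero_add] at hshift
    rw [← Ico_add_one_right_eq_Icc, ← hshift, range_eq_Ico]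
    exact sum_congr rfl fun k _ => by omega
  simp only [hrange]
  induction n using Nat.twoStepInduction with
  | zero => simp
  | one => simp
  | more n ih _ =>
    have hstep : ∑ k ∈ range (n + 2), (n + 2 - k - (k + 2))
        = ∑ k ∈ range n, (n - k - (k + 2)) + n := by
      rw [sum_range_succ', sum_range_succ]
      simp only [show ∀ k, n + 2 - (k + 1) - (k + 1 + 2) = n - k - (k + 2) by omega]
      omega
    rw [hstep]
    have := Nat.add_mod n 2 2
    ring_nf at ih this ⊢
    omega

theorem altColoring_le_one (t x : ℕ) : altColoring t x ≤ 1 := by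
  unfold altColoring
  split <;> simp

theorem altColoring_add_self {t : ℕ} (ht : 0 < t) (x : ℕ) :
    altColoring t (x + t) = 1 - altColoring t x := by
  unfold altColoring
  rw [show x + t + t - 1 = x + t - 1 + t by omega, Nat.add_div_right _ ht]
  split_ifs <;> omega

def altSign (t x : ℕ) : ℤ := 1 - 2 * altColoring t x

theorem abs_altSign_le_one (t x : ℕ) : |altSign t x| ≤ 1 := by
  have := altColoring_le_one t x
  unfold altSign
  rw [abs_le]
  omega

theorem altSign_add_self {t : ℕ} (ht : 0 < t) (x : ℕ) : altSign t (x + t) = -altSign t x := by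
  unfold altSign
  have := altColoring_le_one t x
  rw [altColoring_add_self ht]
  omega

theorem altSign_periodic {t : ℕ} (ht : 0 < t) : Function.Periodic (altSign t) (2 * t) :=
  fun x => by
    rw [two_mul, ← add_assoc, altSign_add_self ht, altSign_add_self ht, neg_neg]

theorem sum_range_altSign {t : ℕ} (ht : 0 < t) : ∑ x ∈ range (2 * t), altSign t x = 0 := by
  simp only [two_mul, sum_range_add, add_comm t, altSign_add_self ht, sum_neg_distrib,
    add_neg_cancel]

theorem abs_sum_Ico_altSign_le {t : ℕ} (ht : 0 < t) (a b : ℕ) :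
    |∑ x ∈ Ico a b, altSign t x| ≤ 4 * t := by
  have := abs_sum_Ico_le_of_periodic (by omega) (altSign_periodic ht) (sum_range_altSign ht)
    (abs_altSign_le_one t) a b
  push_cast at this
  linarith

theorem four_mul_ite_altColoring (t i j : ℕ) :
    4 * (if altColoring t i = altColoring t j ∧ altColoring t j = altColoring t (i + j)
      then 1 else 0 : ℤ) = 1 + altSign t i * altSign t j + altSign t i * altSign t (i + j)
        + altSign t j * altSign t (i + j) := by
  have hi := altColoring_le_one t i
  have hj := altColoring_le_one t j
  have hk := altColoring_le_one t (i + j)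
  unfold altSign
  generalize altColoring t i = a at *
  generalize altColoring t j = b at *
  generalize altColoring t (i + j) = d at *
  interval_cases a <;> interval_cases b <;> interval_cases d <;> simp

theorem abs_four_mul_schurCount_altColoring_sub_le {t : ℕ} (ht : 0 < t) (n : ℕ) :
    |4 * (schurCount n (altColoring t) : ℤ) - ∑ i ∈ Icc 1 n, ((n + 1 - i - (i + 1) : ℕ) : ℤ)|
      ≤ 12 * t * n := by
  have hbilin :=
    abs_sum_mul_sum_Ico_le (abs_altSign_le_one t) (abs_sum_Ico_altSign_le ht) (Icc 1 n)
  simp only [Nat.card_Icc, add_tsub_cancel_right] at hbilin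
  have hij := hbilin (fun i => i + 1) (fun i => n + 1 - i)
  have hik := hbilin (fun i => i + 1 + i) (fun i => n + 1 - i + i)
  have hjk := hbilin (fun j => 1 + j) (fun j => min j (n + 1 - j) + j)
  simp only [← sum_Ico_add', mul_sum] at hij hjk
  simp only [← sum_Ico_add, mul_sum] at hik
  rw [← sum_triangle_comm] at hjk
  rw [schurCount_eq_sum]
  simp only [Nat.cast_sum, Nat.cast_ite, Nat.cast_one, Nat.cast_zero, mul_sum,
    four_mul_ite_altColoring, sum_add_distrib, sum_const, nsmul_one, Nat.card_Ico]
  rw [abs_le] at hij hik hjk ⊢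
  constructor <;> linarith [hij.1, hij.2, hik.1, hik.2, hjk.1, hjk.2]

theorem schurCount_alt (t : ℕ) (ht : 1 ≤ t) :
    ∃ C : ℝ, ∀ n : ℕ,
      |(schurCount n (altColoring t) : ℝ) - (n : ℝ) ^ 2 / 16| ≤ C * n := by
  refine ⟨4 * t, fun n => ?_⟩
  have hcount := abs_four_mul_schurCount_altColoring_sub_le ht n
  have htriangle : 4 * ∑ i ∈ Icc 1 n, ((n + 1 - i - (i + 1) : ℕ) : ℤ) + 2 * n
      = n ^ 2 + (n % 2 : ℕ) := by
    exact_mod_cast four_mul_sum_Icc_tsub_add_two_mul n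
  have hmod : ((n % 2 : ℕ) : ℤ) ≤ n := by exact_mod_cast Nat.mod_le n 2
  have htn : (n : ℤ) ≤ t * n := by exact_mod_cast Nat.le_mul_of_pos_left n ht
  have hZ : |16 * (schurCount n (altColoring t) : ℤ) - n ^ 2| ≤ (64 * t * n : ℤ) := by
    rw [abs_le] at hcount ⊢
    constructor <;> linarith [hcount.1, hcount.2]
  have hR : |16 * (schurCount n (altColoring t) : ℝ) - n ^ 2| ≤ (64 * t * n : ℝ) := by
    exact_mod_cast hZ
  rw [show (schurCount n (altColoring t) : ℝ) - n ^ 2 / 16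
      = (16 * schurCount n (altColoring t) - n ^ 2) / 16 by ring,
    abs_div, abs_of_pos (show (0 : ℝ) < 16 by norm_num)]
  linarith
end
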